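/- arXiv:1406.3777 — 2 statements merged into one kernel-verified Lean document; each statement's English description precedes it below -/
import Mathlib

section
/- Let f, g be semi-invariants of a finite-dimensional complex Lie algebra g, a ∈ g*, and λ, μ ∈ ℂ nonzero. Define h(x) = f(a + λx) and k(x) = g(a + μx). Then {h,k} = 0 and {h,k}_a = 0, i.e. shifted semi-invariants pairwise commute with respect to both the Lie-Poisson bracket and the frozen argument bracket. -/
open MvPolynomial

/-- The Lie–Poisson bracket on `S(g) = ℂ[x₁,…,xₙ]`, where `c` are the structure
constants of `g` in a fixed basis. -/
noncomputable def poissonBracket (n : ℕ) (c : Fin n → Fin n → Fin n → ℂ)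
    (f g : MvPolynomial (Fin n) ℂ) : MvPolynomial (Fin n) ℂ :=
  ∑ i : Fin n, ∑ j : Fin n,
    (∑ k : Fin n, C (c i j k) * X k) * pderiv i f * pderiv j g

/-- The frozen argument bracket at `a ∈ g*` (coordinates of `a` in the dual basis). -/
noncomputable def frozenBracket (n : ℕ) (c : Fin n → Fin n → Fin n → ℂ)
    (a : Fin n → ℂ) (f g : MvPolynomial (Fin n) ℂ) : MvPolynomial (Fin n) ℂ :=
  ∑ i : Fin n, ∑ j : Fin n,
    C (∑ k : Fin n, c i j k * a k) * pderiv i f * pderiv j g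

/-- `f` is a semi-invariant: there is a character `χ` of `g` (vanishing on `[g,g]`)
with `{f,h} = χ(dh)·f` for all `h`. -/
def IsSemiInvariant (n : ℕ) (c : Fin n → Fin n → Fin n → ℂ)
    (f : MvPolynomial (Fin n) ℂ) : Prop :=
  ∃ χ : Fin n → ℂ, (∀ i j, ∑ k, c i j k * χ k = 0) ∧
    ∀ h : MvPolynomial (Fin n) ℂ,
      poissonBracket n c f h = (∑ i, C (χ i) * pderiv i h) * f

/-- The shifted polynomial `x ↦ g(a + λx)`. -/
noncomputable def shiftPoly (n : ℕ) (a : Fin n → ℂ) (l : ℂ)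
    (g : MvPolynomial (Fin n) ℂ) : MvPolynomial (Fin n) ℂ :=
  bind₁ (fun k => C (a k) + C l * X k) g

/-!
Write `D_χ = ∑ χᵢ ∂ᵢ`. For semi-invariants `f, g` with characters `χ, ψ`, antisymmetry gives
`D_χ(g) f = {f, g} = -D_ψ(f) g`. Since `D_ψ` is a derivation commuting with the bracket up to the
term `{·,·}_ψ = 0`, the iterates `D_ψ^k f` stay semi-invariant of character `χ`, so
`g^k D_ψ^k f = (-D_χ g)^k f`; nilpotence of `D_ψ` forces `D_χ g = 0` when `f ≠ 0`. Hence
`{f, g} = 0`, and the Leibniz rule `D_a{f,g} = {f,g}_a + {D_a f, g} + {f, D_a g}` gives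
`{f, g}_a = 0`.

The substitution `x ↦ a + λx` turns the coefficient `⟨x, [eᵢ, eⱼ]⟩` of the Lie–Poisson bracket
into that of the pencil bracket `{·,·}_a + λ{·,·}`, so `h = f(a + λx)` satisfies `{h, K}_a + λ{h, K} = λ D_χ(K) h` for every `K`.
For `K = k = g(a + μx)` this vanishes, and symmetrically `{h, k}_a + μ{h, k} = 0`. If `λ ≠ μ`
both brackets vanish; if `λ = μ` then `{h, k}_a = λ² {f, g}_a(a + λx) = 0`.
-/

open Finset

namespace MvPolynomial

variable {σ R : Type*}

section CommSemiring

variable [CommSemiring R]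

theorem totalDegree_pderiv_le (i : σ) (p : MvPolynomial σ R) :
    (pderiv i p).totalDegree ≤ p.totalDegree - 1 := by
  classical
  conv_lhs => rw [p.as_sum, map_sum]
  refine totalDegree_finsetSum_le fun s hs => ?_
  rw [pderiv_monomial]
  rcases eq_or_ne (s i) 0 with h | h
  · simp [h]
  refine (totalDegree_monomial_le _ _).trans ?_
  have hle : Finsupp.single i 1 ≤ s := Finsupp.single_le_iff.2 (Nat.one_le_iff_ne_zero.2 h)
  have hdeg := le_totalDegree hs
  rw [← tsub_add_cancel_of_le hle, Finsupp.sum_add_index' (fun _ => rfl) (fun _ _ _ => rfl),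
    Finsupp.sum_single_index rfl] at hdeg
  exact Nat.le_sub_one_of_lt hdeg

theorem pderiv_X_eq_C (i j : σ) : ∃ r : R, pderiv i (X j) = C r := by
  classical
  by_cases h : j = i
  · exact ⟨1, by simp [h]⟩
  · exact ⟨0, by simp [pderiv_X_of_ne h]⟩

variable [Fintype σ]

noncomputable def dirDeriv (χ : σ → R) : Derivation R (MvPolynomial σ R) (MvPolynomial σ R) :=
  ∑ i, χ i • pderiv i

theorem dirDeriv_apply (χ : σ → R) (p : MvPolynomial σ R) :
    dirDeriv χ p = ∑ i, C (χ i) * pderiv i p := by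
  rw [dirDeriv, ← Derivation.coeFnAddMonoidHom_apply, map_sum, Finset.sum_apply]
  simp [Derivation.smul_apply, smul_eq_C_mul]

theorem dirDeriv_X (χ : σ → R) (i : σ) : dirDeriv χ (X i) = C (χ i) := by
  classical
  simp [dirDeriv_apply, pderiv_X, Pi.single_apply]

theorem totalDegree_dirDeriv_le (χ : σ → R) (p : MvPolynomial σ R) :
    (dirDeriv χ p).totalDegree ≤ p.totalDegree - 1 := by
  rw [dirDeriv_apply]
  refine totalDegree_finsetSum_le fun i _ => (totalDegree_mul _ _).trans ?_
  simpa using totalDegree_pderiv_le i p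

theorem dirDeriv_iterate_eq_zero (χ : σ → R) (p : MvPolynomial σ R) :
    (dirDeriv χ)^[p.totalDegree + 1] p = 0 := by
  have hdeg : ∀ k, ((dirDeriv χ)^[k] p).totalDegree ≤ p.totalDegree - k := by
    intro k
    induction k with
    | zero => simp
    | succ k ih =>
      rw [Function.iterate_succ_apply']
      exact (totalDegree_dirDeriv_le χ _).trans (by omega)
  have hconst := hdeg p.totalDegree
  rw [Nat.sub_self, Nat.le_zero, totalDegree_eq_zero_iff_eq_C] at hconst
  rw [Function.iterate_succ_apply', hconst, derivation_C]

end CommSemiring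

section CommRing

variable [CommRing R]

theorem derivation_comm_of_map_X_eq_C {D₁ D₂ : Derivation R (MvPolynomial σ R) (MvPolynomial σ R)}
    (h₁ : ∀ i, ∃ r, D₁ (X i) = C r) (h₂ : ∀ i, ∃ r, D₂ (X i) = C r) (p : MvPolynomial σ R) :
    D₁ (D₂ p) = D₂ (D₁ p) := by
  have : ⁅D₁, D₂⁆ = 0 := derivation_ext fun i => by
    obtain ⟨r₁, e₁⟩ := h₁ i
    obtain ⟨r₂, e₂⟩ := h₂ i
    simp [Derivation.commutator_apply, e₁, e₂, derivation_C]
  simpa [Derivation.commutator_apply, sub_eq_zero] using congrArg (· p) this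

variable [Fintype σ]

theorem pderiv_dirDeriv (χ : σ → R) (i : σ) (p : MvPolynomial σ R) :
    pderiv i (dirDeriv χ p) = dirDeriv χ (pderiv i p) :=
  derivation_comm_of_map_X_eq_C (pderiv_X_eq_C i) (fun j => ⟨_, dirDeriv_X χ j⟩) p

theorem dirDeriv_comm (χ ψ : σ → R) (p : MvPolynomial σ R) :
    dirDeriv χ (dirDeriv ψ p) = dirDeriv ψ (dirDeriv χ p) :=
  derivation_comm_of_map_X_eq_C (fun j => ⟨_, dirDeriv_X χ j⟩) (fun j => ⟨_, dirDeriv_X ψ j⟩) p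

end CommRing

end MvPolynomial

section Brackets

variable {n : ℕ} {c : Fin n → Fin n → Fin n → ℂ}

-- The linear function `x ↦ ⟨x, [eᵢ, eⱼ]⟩`.
noncomputable def bracketForm (c : Fin n → Fin n → Fin n → ℂ) (i j : Fin n) :
    MvPolynomial (Fin n) ℂ :=
  ∑ k, C (c i j k) * X k

def IsCharacter (c : Fin n → Fin n → Fin n → ℂ) (χ : Fin n → ℂ) : Prop :=
  ∀ i j, ∑ k, c i j k * χ k = 0

theorem poissonBracket_eq_sum (F G : MvPolynomial (Fin n) ℂ) :
    poissonBracket n c F G = ∑ i, ∑ j, bracketForm c i j * pderiv i F * pderiv j G :=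
  rfl

theorem poissonBracket_X_right (F : MvPolynomial (Fin n) ℂ) (j : Fin n) :
    poissonBracket n c F (X j) = ∑ i, bracketForm c i j * pderiv i F := by
  classical
  simp [poissonBracket_eq_sum, pderiv_X, Pi.single_apply]

theorem dirDeriv_bracketForm (χ : Fin n → ℂ) (i j : Fin n) :
    dirDeriv χ (bracketForm c i j) = C (∑ k, c i j k * χ k) := by
  simp [bracketForm, dirDeriv_X, mul_comm]

theorem poissonBracket_antisymm (hskew : ∀ i j k, c i j k = - c j i k)
    (F G : MvPolynomial (Fin n) ℂ) : poissonBracket n c F G = -poissonBracket n c G F := by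
  rw [poissonBracket, poissonBracket, sum_comm, ← sum_neg_distrib]
  refine sum_congr rfl fun i _ => ?_
  rw [← sum_neg_distrib]
  refine sum_congr rfl fun j _ => ?_
  simp only [hskew j i, map_neg, neg_mul, sum_neg_distrib]
  ring

theorem frozenBracket_antisymm (hskew : ∀ i j k, c i j k = - c j i k) (a : Fin n → ℂ)
    (F G : MvPolynomial (Fin n) ℂ) : frozenBracket n c a F G = -frozenBracket n c a G F := by
  rw [frozenBracket, frozenBracket, sum_comm, ← sum_neg_distrib]
  refine sum_congr rfl fun i _ => ?_
  rw [← sum_neg_distrib]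
  refine sum_congr rfl fun j _ => ?_
  simp only [hskew j i, neg_mul, sum_neg_distrib, map_neg]
  ring

theorem frozenBracket_eq_zero_of_isCharacter {χ : Fin n → ℂ} (hχ : IsCharacter c χ)
    (F G : MvPolynomial (Fin n) ℂ) : frozenBracket n c χ F G = 0 := by
  simp [frozenBracket, hχ _ _]

theorem dirDeriv_poissonBracket (χ : Fin n → ℂ) (F G : MvPolynomial (Fin n) ℂ) :
    dirDeriv χ (poissonBracket n c F G) = frozenBracket n c χ F G +
      poissonBracket n c (dirDeriv χ F) G + poissonBracket n c F (dirDeriv χ G) := by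
  simp only [poissonBracket_eq_sum, frozenBracket, map_sum, ← sum_add_distrib]
  refine sum_congr rfl fun i _ => sum_congr rfl fun j _ => ?_
  simp only [Derivation.leibniz, dirDeriv_bracketForm, pderiv_dirDeriv, smul_eq_mul, map_sum]
  ring

def IsSemiInvariantOf (c : Fin n → Fin n → Fin n → ℂ) (χ : Fin n → ℂ)
    (f : MvPolynomial (Fin n) ℂ) : Prop :=
  ∀ h, poissonBracket n c f h = dirDeriv χ h * f

theorem isSemiInvariant_iff {f : MvPolynomial (Fin n) ℂ} :
    IsSemiInvariant n c f ↔ ∃ χ, IsCharacter c χ ∧ IsSemiInvariantOf c χ f := by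
  simp only [IsSemiInvariant, IsSemiInvariantOf, IsCharacter, dirDeriv_apply]

namespace IsSemiInvariantOf

variable {χ ψ : Fin n → ℂ} {f g : MvPolynomial (Fin n) ℂ}

theorem dirDeriv_of_isCharacter (hf : IsSemiInvariantOf c χ f) (hψ : IsCharacter c ψ) :
    IsSemiInvariantOf c χ (dirDeriv ψ f) := by
  intro h
  have hleib := dirDeriv_poissonBracket (c := c) ψ f h
  rw [frozenBracket_eq_zero_of_isCharacter hψ, hf, hf, Derivation.leibniz, dirDeriv_comm ψ χ,
    smul_eq_mul, smul_eq_mul] at hleib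
  linear_combination -hleib

theorem dirDeriv_mul_eq_neg (hskew : ∀ i j k, c i j k = - c j i k)
    (hf : IsSemiInvariantOf c χ f) (hg : IsSemiInvariantOf c ψ g) :
    dirDeriv χ g * f = -(dirDeriv ψ f * g) := by
  rw [← hf g, ← hg f, poissonBracket_antisymm hskew]

theorem dirDeriv_eq_zero (hskew : ∀ i j k, c i j k = - c j i k)
    (hf : IsSemiInvariantOf c χ f) (hg : IsSemiInvariantOf c ψ g) (hψ : IsCharacter c ψ)
    (hf0 : f ≠ 0) : dirDeriv χ g = 0 := by
  set v := dirDeriv χ g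
  set u : ℕ → MvPolynomial (Fin n) ℂ := fun k => (dirDeriv ψ)^[k] f with hu
  have hu_succ (k : ℕ) : u (k + 1) = dirDeriv ψ (u k) := Function.iterate_succ_apply' _ _ _
  have hu_semi (k : ℕ) : IsSemiInvariantOf c χ (u k) := by
    induction k with
    | zero => exact hf
    | succ k ih => rw [hu_succ]; exact ih.dirDeriv_of_isCharacter hψ
  have hpow (k : ℕ) : g ^ k * u k = (-v) ^ k * f := by
    induction k with
    | zero => simp [hu]
    | succ k ih =>
      have hstep := dirDeriv_mul_eq_neg hskew (hu_semi k) hg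
      rw [← hu_succ] at hstep
      linear_combination (-v) * ih + g ^ k * hstep
  have hvanish : (-v) ^ (f.totalDegree + 1) * f = 0 := by
    rw [← hpow, show u (f.totalDegree + 1) = 0 from dirDeriv_iterate_eq_zero ψ f, mul_zero]
  simpa [hf0] using hvanish

theorem frozenBracket_eq_zero (hskew : ∀ i j k, c i j k = - c j i k)
    (hf : IsSemiInvariantOf c χ f) (hg : IsSemiInvariantOf c ψ g)
    (hχ : IsCharacter c χ) (hψ : IsCharacter c ψ) (a : Fin n → ℂ) :
    frozenBracket n c a f g = 0 := by
  rcases eq_or_ne f 0 with rfl | hf0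
  · simp [frozenBracket]
  rcases eq_or_ne g 0 with rfl | hg0
  · simp [frozenBracket]
  have hDg : dirDeriv χ g = 0 := hf.dirDeriv_eq_zero hskew hg hψ hf0
  have hDf : dirDeriv ψ f = 0 := hg.dirDeriv_eq_zero hskew hf hχ hg0
  have hleib := dirDeriv_poissonBracket (c := c) a f g
  rw [hf g, hDg, poissonBracket_antisymm hskew (dirDeriv a f), hg, hf, dirDeriv_comm ψ,
    dirDeriv_comm χ, hDf, hDg] at hleib
  simpa using hleib.symm

end IsSemiInvariantOf

theorem pderiv_shiftPoly (a : Fin n → ℂ) (l : ℂ) (u : MvPolynomial (Fin n) ℂ) (i : Fin n) :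
    pderiv i (shiftPoly n a l u) = C l * shiftPoly n a l (pderiv i u) := by
  induction u using MvPolynomial.induction_on with
  | C r => simp [shiftPoly]
  | add p q hp hq => simp only [shiftPoly, map_add] at *; rw [hp, hq, mul_add]
  | mul_X p k hp =>
    classical
    simp only [shiftPoly, map_mul, pderiv_mul, bind₁_X_right, map_add, pderiv_C, pderiv_X,
      Pi.single_apply] at *
    rw [hp]
    split_ifs <;> simp <;> ring

theorem dirDeriv_shiftPoly (χ a : Fin n → ℂ) (l : ℂ) (u : MvPolynomial (Fin n) ℂ) :
    dirDeriv χ (shiftPoly n a l u) = C l * shiftPoly n a l (dirDeriv χ u) := by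
  simp only [dirDeriv_apply, pderiv_shiftPoly]
  simp only [shiftPoly, map_sum, map_mul, bind₁_C_right, mul_sum]
  exact sum_congr rfl fun i _ => by ring

theorem shiftPoly_bracketForm (a : Fin n → ℂ) (l : ℂ) (i j : Fin n) :
    shiftPoly n a l (bracketForm c i j) = C (∑ k, c i j k * a k) + C l * bracketForm c i j := by
  simp only [shiftPoly, bracketForm, map_sum, map_mul, bind₁_C_right, bind₁_X_right, mul_sum,
    ← sum_add_distrib]
  exact sum_congr rfl fun k _ => by ring

theorem frozenBracket_shiftPoly (a : Fin n → ℂ) (l : ℂ) (F G : MvPolynomial (Fin n) ℂ) :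
    frozenBracket n c a (shiftPoly n a l F) (shiftPoly n a l G) =
      C (l * l) * shiftPoly n a l (frozenBracket n c a F G) := by
  simp only [frozenBracket, pderiv_shiftPoly]
  simp only [shiftPoly, map_sum, map_mul, bind₁_C_right, mul_sum]
  exact sum_congr rfl fun i _ => sum_congr rfl fun j _ => by ring

theorem IsSemiInvariantOf.frozenBracket_add_poissonBracket_shiftPoly {χ : Fin n → ℂ}
    {f : MvPolynomial (Fin n) ℂ} (hf : IsSemiInvariantOf c χ f) (a : Fin n → ℂ) (l : ℂ)
    (K : MvPolynomial (Fin n) ℂ) :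
    frozenBracket n c a (shiftPoly n a l f) K + C l * poissonBracket n c (shiftPoly n a l f) K =
      C l * (dirDeriv χ K * shiftPoly n a l f) := by
  have hweak (j : Fin n) :
      ∑ i, shiftPoly n a l (bracketForm c i j) * shiftPoly n a l (pderiv i f) =
        C (χ j) * shiftPoly n a l f := by
    have := congrArg (shiftPoly n a l) (hf (X j))
    simpa only [poissonBracket_X_right, dirDeriv_X, shiftPoly, map_sum, map_mul,
      bind₁_C_right] using this
  calc frozenBracket n c a (shiftPoly n a l f) K + C l * poissonBracket n c (shiftPoly n a l f) K
      = C l * ∑ j, (∑ i, shiftPoly n a l (bracketForm c i j) * shiftPoly n a l (pderiv i f)) *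
          pderiv j K := by
        simp only [frozenBracket, poissonBracket_eq_sum, pderiv_shiftPoly, shiftPoly_bracketForm,
          mul_sum, sum_mul, ← sum_add_distrib]
        rw [sum_comm]
        exact sum_congr rfl fun j _ => sum_congr rfl fun i _ => by ring
    _ = C l * (dirDeriv χ K * shiftPoly n a l f) := by
        simp only [hweak, dirDeriv_apply, sum_mul]
        exact congrArg _ (sum_congr rfl fun j _ => by ring)

theorem IsSemiInvariantOf.frozenBracket_add_poissonBracket_shiftPoly_eq_zero {χ ψ : Fin n → ℂ}
    {f g : MvPolynomial (Fin n) ℂ} (hskew : ∀ i j k, c i j k = - c j i k)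
    (hf : IsSemiInvariantOf c χ f) (hg : IsSemiInvariantOf c ψ g) (hψ : IsCharacter c ψ)
    (a : Fin n → ℂ) (l μ : ℂ) :
    frozenBracket n c a (shiftPoly n a l f) (shiftPoly n a μ g) +
      C l * poissonBracket n c (shiftPoly n a l f) (shiftPoly n a μ g) = 0 := by
  rcases eq_or_ne f 0 with rfl | hf0
  · simp [poissonBracket, frozenBracket, shiftPoly]
  rw [hf.frozenBracket_add_poissonBracket_shiftPoly, dirDeriv_shiftPoly,
    hf.dirDeriv_eq_zero hskew hg hψ hf0]
  simp [shiftPoly]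

end Brackets

theorem stmt5_general (n : ℕ) (c : Fin n → Fin n → Fin n → ℂ)
    (hskew : ∀ i j k, c i j k = - c j i k)
    (f g : MvPolynomial (Fin n) ℂ)
    (hf : IsSemiInvariant n c f) (hg : IsSemiInvariant n c g)
    (a : Fin n → ℂ) (l μ : ℂ) (hl : l ≠ 0) :
    poissonBracket n c (shiftPoly n a l f) (shiftPoly n a μ g) = 0 ∧
    frozenBracket n c a (shiftPoly n a l f) (shiftPoly n a μ g) = 0 := by
  obtain ⟨χ, hχ, hf⟩ := isSemiInvariant_iff.1 hf
  obtain ⟨ψ, hψ, hg⟩ := isSemiInvariant_iff.1 hg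
  have hl_pencil := hf.frozenBracket_add_poissonBracket_shiftPoly_eq_zero hskew hg hψ a l μ
  have hμ_pencil : frozenBracket n c a (shiftPoly n a l f) (shiftPoly n a μ g) +
      C μ * poissonBracket n c (shiftPoly n a l f) (shiftPoly n a μ g) = 0 := by
    rw [frozenBracket_antisymm hskew, poissonBracket_antisymm hskew, mul_neg, ← neg_add,
      hg.frozenBracket_add_poissonBracket_shiftPoly_eq_zero hskew hf hχ a μ l, neg_zero]
  rcases eq_or_ne l μ with rfl | hlμ
  · have hfrozen : frozenBracket n c a (shiftPoly n a l f) (shiftPoly n a l g) = 0 := by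
      rw [frozenBracket_shiftPoly, hf.frozenBracket_eq_zero hskew hg hχ hψ]
      simp [shiftPoly]
    rw [hfrozen, zero_add, mul_eq_zero, C_eq_zero] at hl_pencil
    exact ⟨hl_pencil.resolve_left hl, hfrozen⟩
  · have hpoisson : poissonBracket n c (shiftPoly n a l f) (shiftPoly n a μ g) = 0 := by
      have hdiff : C (l - μ) * poissonBracket n c (shiftPoly n a l f) (shiftPoly n a μ g) = 0 := by
        rw [map_sub]
        linear_combination hl_pencil - hμ_pencil
      rwa [mul_eq_zero, C_eq_zero, or_iff_right (sub_ne_zero.2 hlμ)] at hdiff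
    rw [hpoisson, mul_zero, add_zero] at hl_pencil
    exact ⟨hpoisson, hl_pencil⟩

theorem stmt5 (n : ℕ) (c : Fin n → Fin n → Fin n → ℂ)
    (hskew : ∀ i j k, c i j k = - c j i k)
    (hjacobi : ∀ i j l m, (∑ k, c i j k * c k l m) + (∑ k, c j l k * c k i m) +
      (∑ k, c l i k * c k j m) = 0)
    (f g : MvPolynomial (Fin n) ℂ)
    (hf : IsSemiInvariant n c f) (hg : IsSemiInvariant n c g)
    (a : Fin n → ℂ) (l μ : ℂ) (hl : l ≠ 0) (hμ : μ ≠ 0) :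
    poissonBracket n c (shiftPoly n a l f) (shiftPoly n a μ g) = 0 ∧
    frozenBracket n c a (shiftPoly n a l f) (shiftPoly n a μ g) = 0 :=
  stmt5_general n c hskew f g hf hg a l μ hl
end

section
/- In the recursion operator setting (∞ ∉ Λ, R = P∞^{-1}P₀ on L^⊥/L), R is diagonalizable if and only if for each λ ∈ Λ the kernel of the restriction P∞|_{Ker P_λ} has dimension exactly r. -/
open Module LinearMap

variable {V : Type*} [AddCommGroup V] [Module ℂ V]

/-- The pencil `P_λ = P₀ - λ P_∞` of bilinear forms, `λ ∈ ℂ ∪ {∞}` (`∞` is `none`,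
with `P_∞ := P∞`). -/
noncomputable def pencil (P0 Pinf : V →ₗ[ℂ] V →ₗ[ℂ] ℂ) : Option ℂ → (V →ₗ[ℂ] V →ₗ[ℂ] ℂ)
  | none => Pinf
  | some l => P0 - l • Pinf

/-- The generic (minimal) corank `r` of the pencil. -/
noncomputable def genericCorank (P0 Pinf : V →ₗ[ℂ] V →ₗ[ℂ] ℂ) : ℕ :=
  sInf (Set.range fun l : Option ℂ => finrank ℂ ↥(LinearMap.ker (pencil P0 Pinf l)))

/-- The exceptional set `Λ` of pencil parameters where the corank exceeds `r`. -/
def exceptional (P0 Pinf : V →ₗ[ℂ] V →ₗ[ℂ] ℂ) : Set (Option ℂ) :=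
  {l | genericCorank P0 Pinf < finrank ℂ ↥(LinearMap.ker (pencil P0 Pinf l))}

/-- `L = Σ_{λ ∉ Λ} Ker P_λ`. -/
noncomputable def Lspace (P0 Pinf : V →ₗ[ℂ] V →ₗ[ℂ] ℂ) : Submodule ℂ V :=
  ⨆ l ∈ {l : Option ℂ | l ∉ exceptional P0 Pinf}, LinearMap.ker (pencil P0 Pinf l)

/-- The common skew-orthogonal complement `L^⊥` (computed here with `P_∞`). -/
noncomputable def Lperp (P0 Pinf : V →ₗ[ℂ] V →ₗ[ℂ] ℂ) : Submodule ℂ V :=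
  LinearMap.BilinForm.orthogonal (pencil P0 Pinf none) (Lspace P0 Pinf)

/-- `L` viewed as a submodule of `L^⊥`. -/
noncomputable def LinPerp (P0 Pinf : V →ₗ[ℂ] V →ₗ[ℂ] ℂ) : Submodule ℂ ↥(Lperp P0 Pinf) :=
  (Lspace P0 Pinf).comap (Lperp P0 Pinf).subtype

/-- The quotient `L^⊥ / L`, carrying the recursion operator `R = P_∞⁻¹ P₀`. -/
abbrev Qspace (P0 Pinf : V →ₗ[ℂ] V →ₗ[ℂ] ℂ) := ↥(Lperp P0 Pinf) ⧸ LinPerp P0 Pinf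


/-!
The recursion operator is self-adjoint for the nondegenerate form `ω` induced by `P∞` on
`L^⊥/L`, so it is diagonalizable iff `ω` is nondegenerate on each eigenspace (distinct
eigenspaces being `ω`-orthogonal). Lower semicontinuity of the rank along the pencil shows that
`Ker P∞` lies in the span of the generic kernels `Ker P_μ`, `μ ∈ ℂ \ Λ`; then every `P_λ` maps
`L` onto the annihilator of `L^⊥`, so `Ker P_λ ∩ L` has dimension `r`, and the `λ`-eigenspace
of `R` is the image of `Ker P_λ`, which is zero unless `λ ∈ Λ`. For `λ ∈ Λ`, nondegeneracy of
`ω` on it says that the kernel of `P∞` on `Ker P_λ`, which contains `Ker P_λ ∩ L`, is no larger.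
-/

section LinearAlgebra

variable {K E F : Type*} [Field K] [AddCommGroup E] [Module K E] [AddCommGroup F] [Module K F]
  {ι : Type*} [Fintype ι] [DecidableEq ι]

lemma linearIndependent_of_det_ne_zero {φ : ι → Dual K F} {y : ι → F}
    (h : (Matrix.of fun i j => φ i (y j)).det ≠ 0) : LinearIndependent K φ :=
  (Matrix.linearIndependent_rows_of_det_ne_zero h).of_comp
    (LinearMap.pi fun j => Dual.eval K F (y j))

lemma LinearIndependent.exists_det_ne_zero {φ : ι → Dual K F} (h : LinearIndependent K φ) :
    ∃ y : ι → F, (Matrix.of fun i j => φ i (y j)).det ≠ 0 := by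
  have hspan := span_flip_eq_top_iff_linearIndependent.mpr
    (h.map' (ltoFun K F K K) (ker_eq_bot.mpr DFunLike.coe_injective))
  have hsurj : Function.Surjective (LinearMap.pi φ) := by
    rw [← range_eq_top, eq_top_iff, ← hspan, Submodule.span_le]
    rintro _ ⟨v, rfl⟩
    exact ⟨v, rfl⟩
  choose y hy using fun j => hsurj (Pi.single j 1)
  refine ⟨y, ?_⟩
  have : (Matrix.of fun i j => φ i (y j)) = 1 := by
    ext i j
    simpa [Matrix.one_apply, Pi.single_apply, eq_comm] using congrFun (hy j) i
  simp [this]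

lemma le_finrank_map_iff_exists_det_ne_zero [FiniteDimensional K E] (f : E →ₗ[K] F →ₗ[K] K)
    (N : Submodule K E) (k : ℕ) :
    k ≤ finrank K (N.map f) ↔ ∃ x : Fin k → E, (∀ i, x i ∈ N) ∧
      ∃ y : Fin k → F, (Matrix.of fun i j => f (x i) (y j)).det ≠ 0 := by
  constructor
  · intro hk
    obtain ⟨φ, hφ⟩ := exists_linearIndependent_of_le_finrank (R := K) (M := N.map f) hk
    choose x hxN hx using fun i => Submodule.mem_map.mp (φ i).2
    rw [← LinearMap.linearIndependent_iff_of_injOn (N.map f).subtype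
      Subtype.val_injective.injOn] at hφ
    obtain ⟨y, hy⟩ := hφ.exists_det_ne_zero
    refine ⟨x, hxN, y, ?_⟩
    convert hy using 3 with i j
    simp [hx]
  · rintro ⟨x, hxN, y, hdet⟩
    have hli : LinearIndependent K fun i => (⟨f (x i), Submodule.mem_map_of_mem (hxN i)⟩ :
        N.map f) :=
      (LinearMap.linearIndependent_iff_of_injOn (N.map f).subtype
        Subtype.val_injective.injOn).mp (linearIndependent_of_det_ne_zero hdet)
    simpa using hli.fintype_card_le_finrank

lemma finrank_map_add_finrank_inf_ker [FiniteDimensional K E] (f : E →ₗ[K] F)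
    (N : Submodule K E) :
    finrank K (N.map f) + finrank K ↥(N ⊓ ker f) = finrank K N := by
  have h := (f.domRestrict N).finrank_range_add_finrank_ker
  rw [range_domRestrict, ker_domRestrict] at h
  rwa [← Submodule.map_comap_subtype,
    ← (Submodule.equivMapOfInjective N.subtype N.injective_subtype _).finrank_eq]

lemma LinearMap.BilinForm.dualAnnihilator_orthogonal [FiniteDimensional K E]
    (B : LinearMap.BilinForm K E) (N : Submodule K E) :
    (B.orthogonal N).dualAnnihilator = N.map B := by
  have : B.orthogonal N = (N.map B).dualCoannihilator := by
    ext x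
    simp [LinearMap.BilinForm.mem_orthogonal_iff, Submodule.mem_dualCoannihilator]
  rw [this, Subspace.dualCoannihilator_dualAnnihilator_eq]

end LinearAlgebra

section SelfAdjoint

open Module.End

variable {K Q : Type*} [Field K] [AddCommGroup Q] [Module K Q] {ω : LinearMap.BilinForm K Q}
  {R : Module.End K Q}

lemma LinearMap.IsAdjointPair.apply_eq_zero_of_mem_eigenspace (hR : IsAdjointPair ω ω R R)
    {μ ν : K} (hne : μ ≠ ν) {a b : Q} (ha : a ∈ eigenspace R μ) (hb : b ∈ eigenspace R ν) :
    ω a b = 0 := by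
  have h := hR a b
  rw [mem_eigenspace_iff.mp ha, mem_eigenspace_iff.mp hb, map_smul, map_smul,
    LinearMap.smul_apply, smul_eq_mul, smul_eq_mul] at h
  have : (μ - ν) * ω a b = 0 := by linear_combination h
  exact (mul_eq_zero.mp this).resolve_left (sub_ne_zero.mpr hne)

lemma LinearMap.IsAdjointPair.genEigenspace_le_eigenspace (hR : IsAdjointPair ω ω R R) {μ : K}
    (hμ : ∀ a ∈ eigenspace R μ, (∀ b ∈ eigenspace R μ, ω a b = 0) → a = 0) (k : ℕ) :
    genEigenspace R μ k ≤ eigenspace R μ := by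
  induction k with
  | zero => simp
  | succ k ih =>
    intro v hv
    -- `(R - μ) v` is an eigenvector, and self-adjointness makes it orthogonal to `E_μ`
    have hu : (R - μ • 1) v ∈ eigenspace R μ := by
      apply ih
      rw [mem_genEigenspace_nat, mem_ker, ← Module.End.mul_apply, ← pow_succ]
      exact mem_genEigenspace_nat.mp hv
    have hu0 : (R - μ • 1) v = 0 := hμ _ hu fun b hb => by
      simp [hR v b, mem_eigenspace_iff.mp hb]
    rw [mem_eigenspace_iff, ← sub_eq_zero]
    simpa using hu0

theorem LinearMap.IsAdjointPair.iSup_eigenspace_eq_top_iff [IsAlgClosed K]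
    [FiniteDimensional K Q] (hω : ω.SeparatingLeft) (hR : IsAdjointPair ω ω R R) :
    (⨆ μ, eigenspace R μ) = ⊤ ↔
      ∀ μ, ∀ a ∈ eigenspace R μ, (∀ b ∈ eigenspace R μ, ω a b = 0) → a = 0 := by
  constructor
  · intro htop μ a ha hperp
    have : (⨆ ν, eigenspace R ν) ≤ ker (ω a) := iSup_le fun ν b hb => by
      rcases eq_or_ne ν μ with rfl | hne
      · exact hperp b hb
      · exact hR.apply_eq_zero_of_mem_eigenspace hne.symm ha hb
    exact hω a fun b => this (htop ▸ Submodule.mem_top)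
  · intro h
    rw [eq_top_iff, ← R.iSup_maxGenEigenspace_eq_top]
    refine iSup_mono fun μ => ?_
    rw [← iSup_genEigenspace_eq]
    exact iSup_le (hR.genEigenspace_le_eigenspace (h μ))

end SelfAdjoint

section Pencil

variable {P0 Pinf : V →ₗ[ℂ] V →ₗ[ℂ] ℂ}

@[simp]
lemma pencil_none : pencil P0 Pinf none = Pinf := rfl

lemma pencil_some_apply (μ : ℂ) (x y : V) :
    pencil P0 Pinf (some μ) x y = P0 x y - μ * Pinf x y := rfl

lemma pencil_some_zero : pencil P0 Pinf (some 0) = P0 := by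
  simp [pencil]

lemma pencil_some_eq_add (μ lam : ℂ) :
    pencil P0 Pinf (some lam) = pencil P0 Pinf (some μ) + (μ - lam) • Pinf := by
  simp only [pencil]
  module

lemma mem_ker_pencil_iff {μ : ℂ} {x : V} :
    x ∈ ker (pencil P0 Pinf (some μ)) ↔ ∀ y, P0 x y = μ * Pinf x y := by
  simp [pencil, LinearMap.ext_iff, sub_eq_zero]

open Polynomial in
variable (P0 Pinf) in
lemma finite_setOf_finrank_map_pencil_lt [FiniteDimensional ℂ V] (N : Submodule ℂ V)
    (l : Option ℂ) :
    {μ : ℂ | finrank ℂ (N.map (pencil P0 Pinf (some μ))) <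
      finrank ℂ (N.map (pencil P0 Pinf l))}.Finite := by
  classical
  obtain ⟨x, hxN, y, hdet⟩ :=
    (le_finrank_map_iff_exists_det_ne_zero (pencil P0 Pinf l) N _).mp le_rfl
  set A := Matrix.of fun i j => P0 (x i) (y j)
  set B := Matrix.of fun i j => Pinf (x i) (y j)
  -- `p` evaluates to the minor of `P_μ` on `x, y`; its top coefficient is `± det B`
  set p : ℂ[X] := ((X : ℂ[X]) • (-B).map C + A.map C).det
  have hp : ∀ μ, p.eval μ = (Matrix.of fun i j => pencil P0 Pinf (some μ) (x i) (y j)).det := by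
    intro μ
    rw [← coe_evalRingHom, RingHom.map_det]
    congr 1
    ext i j
    simp [A, B, pencil_some_apply]
    ring
  have hp0 : p ≠ 0 := by
    intro h
    apply hdet
    cases l with
    | none =>
      have := coeff_det_X_add_C_card (-B) A
      change p.coeff _ = _ at this
      rw [h, coeff_zero, Matrix.det_neg] at this
      simpa [B, pencil] using this.symm
    | some lam => rw [← hp, h, eval_zero]
  refine (finite_setOfPred_isRoot hp0).subset fun μ hμ => ?_
  by_contra h
  exact hμ.not_ge
    ((le_finrank_map_iff_exists_det_ne_zero _ N _).mpr ⟨x, hxN, y, by rwa [← hp]⟩)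

lemma genericCorank_le (l : Option ℂ) :
    genericCorank P0 Pinf ≤ finrank ℂ (ker (pencil P0 Pinf l)) :=
  Nat.sInf_le ⟨l, rfl⟩

lemma finrank_ker_of_notMem_exceptional {l : Option ℂ} (hl : l ∉ exceptional P0 Pinf) :
    finrank ℂ (ker (pencil P0 Pinf l)) = genericCorank P0 Pinf :=
  le_antisymm (not_lt.mp hl) (genericCorank_le l)

lemma ker_le_Lspace {l : Option ℂ} (hl : l ∉ exceptional P0 Pinf) :
    ker (pencil P0 Pinf l) ≤ Lspace P0 Pinf :=
  le_biSup (fun l => ker (pencil P0 Pinf l)) hl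

lemma finrank_map_add_genericCorank [FiniteDimensional ℂ V] {l : Option ℂ}
    (hl : l ∉ exceptional P0 Pinf) {N : Submodule ℂ V} (hN : ker (pencil P0 Pinf l) ≤ N) :
    finrank ℂ (N.map (pencil P0 Pinf l)) + genericCorank P0 Pinf = finrank ℂ N := by
  rw [← finrank_ker_of_notMem_exceptional hl, ← inf_eq_right.mpr hN]
  exact finrank_map_add_finrank_inf_ker _ _

lemma infinite_setOf_notMem_exceptional [FiniteDimensional ℂ V]
    (hinfreg : none ∉ exceptional P0 Pinf) :
    {μ : ℂ | some μ ∉ exceptional P0 Pinf}.Infinite := by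
  refine (finite_setOf_finrank_map_pencil_lt P0 Pinf ⊤ none).infinite_compl.mono fun μ hμ => ?_
  have hrank := finrank_map_add_finrank_inf_ker (pencil P0 Pinf (some μ)) ⊤
  rw [top_inf_eq] at hrank
  have := finrank_map_add_genericCorank hinfreg le_top
  simp only [Set.mem_compl_iff, Set.mem_ofPred_eq, not_lt] at hμ
  simp only [exceptional, Set.mem_ofPred_eq, not_lt]
  omega

/-- `P∞` is a limit of generic members `P_μ` of the pencil, so its rank on the span `L₀` of their
kernels is at most theirs, `dim L₀ - r`. -/
lemma ker_pencil_none_le_iSup [FiniteDimensional ℂ V] (hinfreg : none ∉ exceptional P0 Pinf) :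
    ker (pencil P0 Pinf none) ≤
      ⨆ μ ∈ {μ : ℂ | some μ ∉ exceptional P0 Pinf}, ker (pencil P0 Pinf (some μ)) := by
  set L₀ := ⨆ μ ∈ {μ : ℂ | some μ ∉ exceptional P0 Pinf}, ker (pencil P0 Pinf (some μ))
  obtain ⟨μ, hμ, hμrank⟩ := (infinite_setOf_notMem_exceptional hinfreg).exists_notMem_finite
    (finite_setOf_finrank_map_pencil_lt P0 Pinf L₀ none)
  have h1 : finrank ℂ (L₀.map (pencil P0 Pinf (some μ))) + genericCorank P0 Pinf =
      finrank ℂ L₀ :=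
    finrank_map_add_genericCorank hμ (le_biSup (fun μ => ker (pencil P0 Pinf (some μ))) hμ)
  have h2 := finrank_map_add_finrank_inf_ker (pencil P0 Pinf none) L₀
  have h3 := finrank_ker_of_notMem_exceptional hinfreg
  simp only [Set.mem_ofPred_eq, not_lt] at hμrank
  rw [← Submodule.eq_of_le_of_finrank_le
    (inf_le_right : L₀ ⊓ ker (pencil P0 Pinf none) ≤ _) (by omega)]
  exact inf_le_left

lemma Lspace_eq_iSup [FiniteDimensional ℂ V] (hinfreg : none ∉ exceptional P0 Pinf) :
    Lspace P0 Pinf =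
      ⨆ μ ∈ {μ : ℂ | some μ ∉ exceptional P0 Pinf}, ker (pencil P0 Pinf (some μ)) := by
  refine le_antisymm (iSup₂_le fun l hl => ?_) (iSup₂_le fun μ hμ => ker_le_Lspace hμ)
  cases l with
  | none => exact ker_pencil_none_le_iSup hinfreg
  | some μ => exact le_biSup (fun μ => ker (pencil P0 Pinf (some μ))) hl

lemma pencil_apply_eq_zero_of_mem_Lspace_of_mem_Lperp [FiniteDimensional ℂ V]
    (hinfreg : none ∉ exceptional P0 Pinf) (lam : ℂ) {m w : V} (hm : m ∈ Lspace P0 Pinf)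
    (hw : w ∈ Lperp P0 Pinf) : pencil P0 Pinf (some lam) m w = 0 := by
  suffices Lspace P0 Pinf ≤ ker ((pencil P0 Pinf (some lam)).flip w) from this hm
  rw [Lspace_eq_iSup hinfreg]
  refine iSup₂_le fun μ hμ z hz => ?_
  rw [mem_ker, flip_apply, pencil_some_eq_add μ lam, LinearMap.add_apply, LinearMap.smul_apply,
    mem_ker.mp hz]
  simp [show Pinf z w = 0 from hw z (ker_le_Lspace hμ hz)]

lemma map_pencil_Lspace [FiniteDimensional ℂ V] (hinfreg : none ∉ exceptional P0 Pinf)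
    (lam : ℂ) :
    (Lspace P0 Pinf).map (pencil P0 Pinf (some lam)) =
      (Lspace P0 Pinf).map (pencil P0 Pinf none) := by
  have hle : (Lspace P0 Pinf).map (pencil P0 Pinf (some lam)) ≤
      (Lspace P0 Pinf).map (pencil P0 Pinf none) := by
    rw [← LinearMap.BilinForm.dualAnnihilator_orthogonal (pencil P0 Pinf none)]
    rintro _ ⟨m, hm, rfl⟩
    exact (Submodule.mem_dualAnnihilator _).mpr fun w hw =>
      pencil_apply_eq_zero_of_mem_Lspace_of_mem_Lperp hinfreg lam hm hw
  by_cases hlam : some lam ∈ exceptional P0 Pinf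
  · -- for `μ ≠ λ` and `z ∈ Ker P_μ`, `P_λ z = (μ - λ) P∞ z`
    refine le_antisymm hle ?_
    rw [Submodule.map_le_iff_le_comap]
    conv_lhs => rw [Lspace_eq_iSup hinfreg]
    refine iSup₂_le fun μ hμ z hz =>
      ⟨(μ - lam)⁻¹ • z, Submodule.smul_mem _ _ (ker_le_Lspace hμ hz), ?_⟩
    have hne : μ - lam ≠ 0 := sub_ne_zero.mpr fun h => hμ (h ▸ hlam)
    rw [map_smul, pencil_some_eq_add μ lam, LinearMap.add_apply, mem_ker.mp hz, zero_add,
      LinearMap.smul_apply, smul_smul, inv_mul_cancel₀ hne, one_smul, pencil_none]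
  · refine Submodule.eq_of_le_of_finrank_le hle ?_
    have h1 := finrank_map_add_genericCorank hlam (ker_le_Lspace hlam)
    have h2 := finrank_map_add_genericCorank hinfreg (ker_le_Lspace hinfreg)
    omega

lemma finrank_Lspace_inf_ker [FiniteDimensional ℂ V] (hinfreg : none ∉ exceptional P0 Pinf)
    (lam : ℂ) :
    finrank ℂ ↥(Lspace P0 Pinf ⊓ ker (pencil P0 Pinf (some lam))) = genericCorank P0 Pinf := by
  have h1 := finrank_map_add_finrank_inf_ker (pencil P0 Pinf (some lam)) (Lspace P0 Pinf)
  have h2 := finrank_map_add_genericCorank hinfreg (ker_le_Lspace hinfreg)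
  rw [map_pencil_Lspace hinfreg lam] at h1
  omega

lemma mem_Lspace_sup_ker_iff [FiniteDimensional ℂ V] (hinfreg : none ∉ exceptional P0 Pinf)
    (lam : ℂ) {x : V} :
    x ∈ Lspace P0 Pinf ⊔ ker (pencil P0 Pinf (some lam)) ↔
      ∀ w ∈ Lperp P0 Pinf, pencil P0 Pinf (some lam) x w = 0 := by
  rw [← Submodule.comap_map_eq, Submodule.mem_comap, map_pencil_Lspace hinfreg lam, Lperp,
    ← LinearMap.BilinForm.dualAnnihilator_orthogonal, Submodule.mem_dualAnnihilator]

lemma mem_Lspace_iff [FiniteDimensional ℂ V] (hinfreg : none ∉ exceptional P0 Pinf) {x : V} :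
    x ∈ Lspace P0 Pinf ↔ ∀ w ∈ Lperp P0 Pinf, Pinf x w = 0 := by
  rw [← sup_eq_left.mpr (ker_le_Lspace hinfreg), ← Submodule.comap_map_eq, Submodule.mem_comap,
    Lperp,
    ← LinearMap.BilinForm.dualAnnihilator_orthogonal, Submodule.mem_dualAnnihilator]
  rfl

lemma pencil_none_apply_eq_zero_of_mem_ker (h0 : P0.IsAlt) (hinf : Pinf.IsAlt) {μ lam : ℂ}
    (hne : μ ≠ lam) {z v : V} (hz : z ∈ ker (pencil P0 Pinf (some μ)))
    (hv : v ∈ ker (pencil P0 Pinf (some lam))) : Pinf z v = 0 := by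
  have hzv := mem_ker_pencil_iff.mp hz v
  have hvz := mem_ker_pencil_iff.mp hv z
  rw [← h0.neg, ← hinf.neg] at hvz
  have : (μ - lam) * Pinf z v = 0 := by linear_combination -hzv - hvz
  exact (mul_eq_zero.mp this).resolve_left (sub_ne_zero.mpr hne)

lemma ker_pencil_le_Lperp (h0 : P0.IsAlt) (hinf : Pinf.IsAlt) {lam : ℂ}
    (hlam : some lam ∈ exceptional P0 Pinf) : ker (pencil P0 Pinf (some lam)) ≤ Lperp P0 Pinf := by
  intro v hv
  suffices Lspace P0 Pinf ≤ ker ((pencil P0 Pinf none).flip v) from fun m hm => this hm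
  refine iSup₂_le fun l hl z hz => ?_
  cases l with
  | none => simpa using LinearMap.congr_fun (mem_ker.mp hz) v
  | some μ =>
    exact pencil_none_apply_eq_zero_of_mem_ker h0 hinf (by rintro rfl; exact hl hlam) hz hv

/-- The kernel of `P∞` restricted to `Ker P_λ`. -/
noncomputable def pinfRadical (P0 Pinf : V →ₗ[ℂ] V →ₗ[ℂ] ℂ) (lam : ℂ) : Submodule ℂ V :=
  ker (pencil P0 Pinf (some lam)) ⊓
    LinearMap.BilinForm.orthogonal (pencil P0 Pinf none) (ker (pencil P0 Pinf (some lam)))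

lemma Lspace_inf_ker_le_pinfRadical (h0 : P0.IsAlt) (hinf : Pinf.IsAlt) {lam : ℂ}
    (hlam : some lam ∈ exceptional P0 Pinf) :
    Lspace P0 Pinf ⊓ ker (pencil P0 Pinf (some lam)) ≤ pinfRadical P0 Pinf lam :=
  fun x hx => ⟨hx.2, fun _ hn => hinf.eq_iff.mp (ker_pencil_le_Lperp h0 hinf hlam hn x hx.1)⟩

lemma pinfRadical_le_Lspace_iff [FiniteDimensional ℂ V] (h0 : P0.IsAlt) (hinf : Pinf.IsAlt)
    (hinfreg : none ∉ exceptional P0 Pinf) {lam : ℂ} (hlam : some lam ∈ exceptional P0 Pinf) :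
    pinfRadical P0 Pinf lam ≤ Lspace P0 Pinf ↔
      finrank ℂ (pinfRadical P0 Pinf lam) = genericCorank P0 Pinf := by
  have hle := Lspace_inf_ker_le_pinfRadical h0 hinf hlam
  rw [← finrank_Lspace_inf_ker hinfreg lam]
  constructor
  · intro h
    rw [le_antisymm (le_inf h inf_le_left) hle]
  · intro h
    rw [← Submodule.eq_of_le_of_finrank_eq hle h.symm]
    exact inf_le_left

end Pencil

section Quotient

open Module.End

variable {P0 Pinf : V →ₗ[ℂ] V →ₗ[ℂ] ℂ}

def IsRecursionOperator (P0 Pinf : V →ₗ[ℂ] V →ₗ[ℂ] ℂ) (R : Module.End ℂ (Qspace P0 Pinf)) :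
    Prop :=
  ∀ ξ ξ' : Lperp P0 Pinf, R (Submodule.Quotient.mk ξ) = Submodule.Quotient.mk ξ' →
    ∀ η : Lperp P0 Pinf, Pinf ξ' η = P0 ξ η

noncomputable def quotientForm (P0 : V →ₗ[ℂ] V →ₗ[ℂ] ℂ) (hinf : Pinf.IsAlt) :
    LinearMap.BilinForm ℂ (Qspace P0 Pinf) :=
  (Pinf.compl₁₂ (Lperp P0 Pinf).subtype (Lperp P0 Pinf).subtype).liftQ₂
    (LinPerp P0 Pinf) (LinPerp P0 Pinf)
    (fun m hm => LinearMap.ext fun y => y.2 m hm)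
    (fun m hm => LinearMap.ext fun y => hinf.eq_iff.mp (y.2 m hm))

variable {R : Module.End ℂ (Qspace P0 Pinf)}

@[simp]
lemma quotientForm_mk (hinf : Pinf.IsAlt) (x y : Lperp P0 Pinf) :
    quotientForm P0 hinf (Submodule.Quotient.mk x) (Submodule.Quotient.mk y) = Pinf x y :=
  rfl

lemma quotientForm_separatingLeft [FiniteDimensional ℂ V] (hinf : Pinf.IsAlt)
    (hinfreg : none ∉ exceptional P0 Pinf) :
    (quotientForm P0 hinf).SeparatingLeft := by
  intro a ha
  obtain ⟨x, rfl⟩ := Submodule.Quotient.mk_surjective _ a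
  refine (Submodule.Quotient.mk_eq_zero _).mpr ((mem_Lspace_iff hinfreg).mpr fun w hw => ?_)
  simpa using ha (Submodule.Quotient.mk ⟨w, hw⟩)

lemma isAdjointPair_quotientForm (h0 : P0.IsAlt) (hinf : Pinf.IsAlt)
    (hR : IsRecursionOperator P0 Pinf R) :
    IsAdjointPair (quotientForm P0 hinf) (quotientForm P0 hinf) R R := by
  intro a b
  obtain ⟨x, rfl⟩ := Submodule.Quotient.mk_surjective _ a
  obtain ⟨y, rfl⟩ := Submodule.Quotient.mk_surjective _ b
  obtain ⟨x', hx'⟩ := Submodule.Quotient.mk_surjective _ (R (Submodule.Quotient.mk x))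
  obtain ⟨y', hy'⟩ := Submodule.Quotient.mk_surjective _ (R (Submodule.Quotient.mk y))
  rw [← hx', ← hy', quotientForm_mk hinf, quotientForm_mk hinf, hR x x' hx'.symm y,
    ← hinf.neg (y' : V) x, hR y y' hy'.symm x, h0.neg]

lemma mk_mem_eigenspace_iff [FiniteDimensional ℂ V] (hinfreg : none ∉ exceptional P0 Pinf)
    (hR : IsRecursionOperator P0 Pinf R) (μ : ℂ) (ξ : Lperp P0 Pinf) :
    Submodule.Quotient.mk ξ ∈ eigenspace R μ ↔
      (ξ : V) ∈ Lspace P0 Pinf ⊔ ker (pencil P0 Pinf (some μ)) := by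
  obtain ⟨ξ', hξ'⟩ := Submodule.Quotient.mk_surjective _ (R (Submodule.Quotient.mk ξ))
  rw [mem_eigenspace_iff, ← hξ', ← Submodule.Quotient.mk_smul, Submodule.Quotient.eq,
    mem_Lspace_sup_ker_iff hinfreg]
  change ((ξ' - μ • ξ : Lperp P0 Pinf) : V) ∈ Lspace P0 Pinf ↔ _
  rw [mem_Lspace_iff hinfreg]
  refine forall₂_congr fun w hw => ?_
  simp [pencil_some_apply, ← hR ξ ξ' hξ'.symm ⟨w, hw⟩]

lemma eigenspace_eq_bot [FiniteDimensional ℂ V] (hinfreg : none ∉ exceptional P0 Pinf)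
    (hR : IsRecursionOperator P0 Pinf R) {μ : ℂ} (hμ : some μ ∉ exceptional P0 Pinf) :
    eigenspace R μ = ⊥ := by
  refine eq_bot_iff.mpr fun a ha => ?_
  obtain ⟨ξ, rfl⟩ := Submodule.Quotient.mk_surjective _ a
  rw [mk_mem_eigenspace_iff hinfreg hR, sup_eq_left.mpr (ker_le_Lspace hμ)] at ha
  exact (Submodule.Quotient.mk_eq_zero _).mpr ha

lemma exists_mk_eq_of_mem_eigenspace [FiniteDimensional ℂ V] (h0 : P0.IsAlt)
    (hinf : Pinf.IsAlt) (hinfreg : none ∉ exceptional P0 Pinf)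
    (hR : IsRecursionOperator P0 Pinf R) {μ : ℂ} (hμ : some μ ∈ exceptional P0 Pinf)
    {a : Qspace P0 Pinf} (ha : a ∈ eigenspace R μ) :
    ∃ x : Lperp P0 Pinf,
      (x : V) ∈ ker (pencil P0 Pinf (some μ)) ∧ Submodule.Quotient.mk x = a := by
  obtain ⟨ξ, rfl⟩ := Submodule.Quotient.mk_surjective _ a
  obtain ⟨m, hm, z, hz, hmz⟩ :=
    Submodule.mem_sup.mp ((mk_mem_eigenspace_iff hinfreg hR μ ξ).mp ha)
  refine ⟨⟨z, ker_pencil_le_Lperp h0 hinf hμ hz⟩, hz, (Submodule.Quotient.eq _).mpr ?_⟩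
  change z - (ξ : V) ∈ Lspace P0 Pinf
  rw [← hmz, sub_add_cancel_right]
  exact neg_mem hm

lemma quotientForm_mk_orthogonal_eigenspace_iff [FiniteDimensional ℂ V] (h0 : P0.IsAlt)
    (hinf : Pinf.IsAlt) (hinfreg : none ∉ exceptional P0 Pinf)
    (hR : IsRecursionOperator P0 Pinf R) {μ : ℂ} (hμ : some μ ∈ exceptional P0 Pinf)
    (x : Lperp P0 Pinf) :
    (∀ b ∈ eigenspace R μ, quotientForm P0 hinf (Submodule.Quotient.mk x) b = 0) ↔
      (x : V) ∈ LinearMap.BilinForm.orthogonal (pencil P0 Pinf none)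
        (ker (pencil P0 Pinf (some μ))) := by
  constructor
  · intro h n hn
    let ν : Lperp P0 Pinf := ⟨n, ker_pencil_le_Lperp h0 hinf hμ hn⟩
    have hb : Submodule.Quotient.mk ν ∈ eigenspace R μ :=
      (mk_mem_eigenspace_iff hinfreg hR μ _).mpr (Submodule.mem_sup_right (by exact hn))
    exact hinf.eq_iff.mp (h _ hb)
  · intro h b hb
    obtain ⟨y, hy, rfl⟩ := exists_mk_eq_of_mem_eigenspace h0 hinf hinfreg hR hμ hb
    exact hinf.eq_iff.mp (h y hy)

lemma eigenspace_nondegenerate_iff [FiniteDimensional ℂ V] (h0 : P0.IsAlt)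
    (hinf : Pinf.IsAlt) (hinfreg : none ∉ exceptional P0 Pinf)
    (hR : IsRecursionOperator P0 Pinf R) (μ : ℂ) :
    (∀ a ∈ eigenspace R μ, (∀ b ∈ eigenspace R μ, quotientForm P0 hinf a b = 0) → a = 0) ↔
      (some μ ∈ exceptional P0 Pinf →
        finrank ℂ (pinfRadical P0 Pinf μ) = genericCorank P0 Pinf) := by
  by_cases hμ : some μ ∈ exceptional P0 Pinf
  · rw [← pinfRadical_le_Lspace_iff h0 hinf hinfreg hμ, imp_iff_right hμ]
    constructor
    · intro h x hx
      let ξ : Lperp P0 Pinf := ⟨x, ker_pencil_le_Lperp h0 hinf hμ hx.1⟩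
      have hmem := (mk_mem_eigenspace_iff hinfreg hR μ ξ).mpr (Submodule.mem_sup_right hx.1)
      exact (Submodule.Quotient.mk_eq_zero (LinPerp P0 Pinf)).mp
        (h _ hmem ((quotientForm_mk_orthogonal_eigenspace_iff h0 hinf hinfreg hR hμ ξ).mpr hx.2))
    · intro h a ha hperp
      obtain ⟨x, hx, rfl⟩ := exists_mk_eq_of_mem_eigenspace h0 hinf hinfreg hR hμ ha
      exact (Submodule.Quotient.mk_eq_zero _).mpr
        (h ⟨hx, (quotientForm_mk_orthogonal_eigenspace_iff h0 hinf hinfreg hR hμ x).mp hperp⟩)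
  · simp only [hμ, false_implies, iff_true, eigenspace_eq_bot hinfreg hR hμ, Submodule.mem_bot]
    exact fun a ha _ => ha

end Quotient

/-- The recursion operator is diagonalizable iff for each `λ ∈ Λ` the kernel of the
restriction of `P_∞` to `Ker P_λ` has dimension exactly `r`. -/
theorem stmt15 [FiniteDimensional ℂ V] (P0 Pinf : V →ₗ[ℂ] V →ₗ[ℂ] ℂ)
    (h0 : ∀ v, P0 v v = 0) (hinf : ∀ v, Pinf v v = 0)
    (hinfreg : none ∉ exceptional P0 Pinf)
    (R : Qspace P0 Pinf →ₗ[ℂ] Qspace P0 Pinf)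
    (hR : ∀ ξ ξ' : ↥(Lperp P0 Pinf),
      R (Submodule.Quotient.mk ξ) = Submodule.Quotient.mk ξ' →
      ∀ η : ↥(Lperp P0 Pinf),
        pencil P0 Pinf none (ξ' : V) (η : V) = pencil P0 Pinf (some 0) (ξ : V) (η : V)) :
    (⨆ μ : ℂ, Module.End.eigenspace R μ) = ⊤ ↔
      ∀ l : ℂ, (some l : Option ℂ) ∈ exceptional P0 Pinf →
        finrank ℂ ↥(LinearMap.ker (pencil P0 Pinf (some l)) ⊓
          LinearMap.BilinForm.orthogonal (pencil P0 Pinf none)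
            (LinearMap.ker (pencil P0 Pinf (some l)))) = genericCorank P0 Pinf := by
  have hrec : IsRecursionOperator P0 Pinf R := fun ξ ξ' h η => by
    simpa [pencil_some_zero] using hR ξ ξ' h η
  rw [(isAdjointPair_quotientForm h0 hinf hrec).iSup_eigenspace_eq_top_iff
    (quotientForm_separatingLeft hinf hinfreg)]
  exact forall_congr' (eigenspace_nondegenerate_iff h0 hinf hinfreg hrec)
end
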